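/- The set R of all multisegments of weight (n+1,...,n+1) (over all n ≥ 0), equipped with concatenation, is a graded monoid with the empty multisegment as identity; moreover the suspension map S: R → R is injective and its image consists of primitive elements of R. -/

import Mathlib

/-- A segment is an interval `[i,j]` of positive integers, encoded as the
pair `(i, j)` with `1 ≤ i ≤ j`.  A multisegment is a multiset of segments. -/
abbrev Seg := ℕ × ℕ

/-- The weight of the multisegment `M` at `k`: the number of segments of `M`
containing `k`. -/
def wt (M : Multiset Seg) (k : ℕ) : ℕ :=
  (M.filter (fun s => s.1 ≤ k ∧ k ≤ s.2)).card

/-- `M` belongs to `R_n`: all its members are segments contained in `[1,n]`,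
and its weight is `(n+1, …, n+1)`. -/
def InR (n : ℕ) (M : Multiset Seg) : Prop :=
  (∀ s ∈ M, 1 ≤ s.1 ∧ s.1 ≤ s.2 ∧ s.2 ≤ n) ∧
  ∀ k, 1 ≤ k → k ≤ n → wt M k = n + 1

/-- Concatenation of multisegments `M ∈ R_p` and `N ∈ R_q`: keep the segments
of `M` ending before `p` and those of `N` (shifted by `p`) starting after `1`,
and glue the segments of `M` ending at `p` (padded with `q` copies of `[1,p]`)
to the segments of `N` starting at `1` (padded with `p` copies of `[1,q]`),
matching shortest with shortest. -/
def concatMS (p q : ℕ) (M N : Multiset Seg) : Multiset Seg :=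
  if p = 0 then N
  else if q = 0 then M
  else
    M.filter (fun s => s.2 < p)
      + (N.filter (fun s => 1 < s.1)).map (fun s => (s.1 + p, s.2 + p))
      + ↑(List.map (fun x : ℕ × ℕ => (x.1, x.2 + p))
          (List.zip
            ((((M.filter (fun s : Seg => s.2 = p)).map Prod.fst
                + Multiset.replicate q 1).sort (· ≤ ·)).reverse)
            ((((N.filter (fun s : Seg => s.1 = 1)).map Prod.snd
                + Multiset.replicate p q).sort (· ≤ ·)))))

/-- Suspension of a multisegment `M ∈ R_n`: each segment is pushed inward
(`[i,j] ↦ [i+1,j+1]`, keeping start `1` at `1` and sending end `n` to `n+2`)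
and the four segments `[1,1]`, `[2,n+2]`, `[1,n+1]`, `[n+2,n+2]` are added;
the suspension of the empty multisegment is `{[1,1],[2,2],[1,2]}`. -/
def suspMS (n : ℕ) (M : Multiset Seg) : Multiset Seg :=
  if n = 0 then {(1, 1), (2, 2), (1, 2)}
  else
    M.map (fun s => (if s.1 = 1 then 1 else s.1 + 1, if s.2 = n then n + 2 else s.2 + 1))
      + {(1, 1), (2, n + 2), (1, n + 1), (n + 2, n + 2)}

/-!
In `M * N ∈ R_{p+q}` the segments crossing the cut between `p` and `p + 1` are exactly the
glued ones, and they are nested because starts are taken in decreasing and ends in increasing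
order. An element of `R_n` whose segments crossing a cut are nested is determined by the
segments not crossing it: the weights give the multisets of starts and of ends of the crossing
segments, and a nested family is determined by these (its largest start goes with its smallest
end). For associativity, cut `(M * N) * P` and `M * (N * P)` at `p + q`; their non-crossing
parts agree because the ends of `N` below `q` are glued to the same starts of `M` in `M * N`
and in `M * (N * P)`.

A suspension contains `[1, 1]`, `[1, n + 1]` and `[2, n + 2]`. No segment of `A * B` ends at
the cut `p`, which rules out `p = 1` and `p = n + 1`; for `2 ≤ p ≤ n` the last two segments
both cross the cut without being nested.
-/


namespace List

lemma pairwise_zip_of_pairwise {α β : Type*} {r₁ : α → α → Prop} {r₂ : β → β → Prop} :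
    ∀ {l₁ : List α} {l₂ : List β}, l₁.Pairwise r₁ → l₂.Pairwise r₂ →
      (l₁.zip l₂).Pairwise (fun x y => r₁ x.1 y.1 ∧ r₂ x.2 y.2)
  | [], _, _, _ | _ :: _, [], _, _ => by simp
  | a :: l₁, b :: l₂, h₁, h₂ => by
    rw [List.pairwise_cons] at h₁ h₂
    refine List.pairwise_cons.2 ⟨fun y hy => ?_, pairwise_zip_of_pairwise h₁.2 h₂.2⟩
    have hy := List.of_mem_zip (a := y.1) (b := y.2) hy
    exact ⟨h₁.1 _ hy.1, h₂.1 _ hy.2⟩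

lemma filter_zip_snd_lt {α β : Type*} [LinearOrder β] (c : β) :
    ∀ (l₁ : List α) {l₂ : List β}, l₂.Pairwise (· ≤ ·) →
      (l₁.zip l₂).filter (fun x => x.2 < c)
        = (l₁.take (l₂.filter (· < c)).length).zip (l₂.filter (· < c))
  | _, [], _ | [], _ :: _, _ => by simp
  | a :: l₁, b :: l₂, h => by
    rw [List.pairwise_cons] at h
    by_cases hb : b < c
    · simp [hb, filter_zip_snd_lt c l₁ h.2]
    · have hge : ∀ x ∈ l₂, ¬ x < c := fun x hx hx' => hb ((h.1 x hx).trans_lt hx')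
      have hz : (l₁.zip l₂).filter (fun x => x.2 < c) = [] :=
        List.filter_eq_nil_iff.2 fun x hx => by
          simpa using hge _ (List.of_mem_zip (a := x.1) (b := x.2) hx).2
      simpa [hb, hz] using hge

lemma take_append_replicate_add {α : Type*} {k m : ℕ} (l : List α) (a : α) (r : ℕ)
    (hk : k ≤ l.length + m) :
    (l ++ replicate m a).take k = (l ++ replicate (m + r) a).take k := by
  rw [replicate_add, ← append_assoc, take_append_of_le_length (l₁ := l ++ _) (by simpa using hk)]

end List

namespace Multiset

lemma filter_sort {α : Type*} [LinearOrder α] (s : Multiset α) (P : α → Prop)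
    [DecidablePred P] : (s.sort (· ≤ ·)).filter P = (s.filter P).sort (· ≤ ·) := by
  refine List.Perm.eq_of_pairwise' (r := (· ≤ ·)) ((pairwise_sort _ _).filter _)
    (pairwise_sort _ _) ?_
  rw [← coe_eq_coe, ← filter_coe, sort_eq, sort_eq]

lemma sort_add_of_forall_le {α : Type*} [LinearOrder α] {s t : Multiset α}
    (h : ∀ a ∈ s, ∀ b ∈ t, a ≤ b) :
    (s + t).sort (· ≤ ·) = s.sort (· ≤ ·) ++ t.sort (· ≤ ·) := by
  refine List.Perm.eq_of_pairwise' (r := (· ≤ ·)) (pairwise_sort _ _) ?_ ?_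
  · exact List.pairwise_append.2 ⟨pairwise_sort _ _, pairwise_sort _ _,
      fun a ha b hb => h a (by simpa using ha) b (by simpa using hb)⟩
  · rw [← coe_eq_coe, sort_eq, ← coe_add, sort_eq,
      sort_eq]

lemma sort_replicate {α : Type*} [LinearOrder α] (n : ℕ) (a : α) :
    (replicate n a).sort (· ≤ ·) = List.replicate n a := by
  rw [← coe_replicate, coe_sort,
    List.mergeSort_eq_self _ (List.pairwise_replicate.2 (Or.inr le_rfl))]

lemma countP_replicate_of_pos {α : Type*} {P : α → Prop} [DecidablePred P] {a : α}
    (n : ℕ) (h : P a) : (replicate n a).countP P = n := by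
  rw [countP_eq_card.2 fun b hb => eq_of_mem_replicate hb ▸ h, card_replicate]

lemma countP_ge_eq_count_add_countP_ge (S : Multiset ℕ) (x : ℕ) :
    S.countP (x ≤ ·) = S.count x + S.countP (x + 1 ≤ ·) := by
  induction S using Multiset.induction_on with
  | empty => simp
  | cons a S ih =>
    simp only [countP_cons, count_cons, ih]
    split_ifs <;> omega

lemma countP_le_succ_eq_countP_le_add_count (S : Multiset ℕ) (x : ℕ) :
    S.countP (· ≤ x + 1) = S.countP (· ≤ x) + S.count (x + 1) := by
  induction S using Multiset.induction_on with
  | empty => simp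
  | cons a S ih =>
    simp only [countP_cons, count_cons, ih]
    split_ifs <;> omega

lemma countP_le_zero_eq_count (S : Multiset ℕ) : S.countP (· ≤ 0) = S.count 0 := by
  rw [count]
  exact countP_congr rfl fun x _ => propext (Nat.le_zero.trans eq_comm)

variable {S T : Multiset ℕ}

lemma eq_of_countP_ge_eq {a b : ℕ} (hab : a ≤ b) (hS : ∀ x ∈ S, a ≤ x ∧ x ≤ b)
    (hT : ∀ x ∈ T, a ≤ x ∧ x ≤ b)
    (h : ∀ k, a ≤ k → k ≤ b → S.countP (k ≤ ·) = T.countP (k ≤ ·)) : S = T := by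
  have hall : ∀ k, S.countP (k ≤ ·) = T.countP (k ≤ ·) := by
    intro k
    rcases lt_or_ge b k with hbk | hkb
    · rw [countP_eq_zero.2 fun x hx => by have := hS x hx; omega,
        countP_eq_zero.2 fun x hx => by have := hT x hx; omega]
    rcases lt_or_ge k a with hka | hak
    · rw [countP_eq_card.2 fun x hx => by have := hS x hx; omega,
        countP_eq_card.2 fun x hx => by have := hT x hx; omega,
        ← countP_eq_card.2 fun x hx => (hS x hx).1, ← countP_eq_card.2 fun x hx => (hT x hx).1]
      exact h a le_rfl hab
    · exact h k hak hkb
  refine ext.2 fun x => ?_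
  have hS := S.countP_ge_eq_count_add_countP_ge x
  have hT := T.countP_ge_eq_count_add_countP_ge x
  rw [hall, hall] at hS
  omega

lemma eq_of_countP_le_eq {a b : ℕ} (hab : a ≤ b) (hS : ∀ x ∈ S, a ≤ x ∧ x ≤ b)
    (hT : ∀ x ∈ T, a ≤ x ∧ x ≤ b)
    (h : ∀ k, a ≤ k → k ≤ b → S.countP (· ≤ k) = T.countP (· ≤ k)) : S = T := by
  have hall : ∀ k, S.countP (· ≤ k) = T.countP (· ≤ k) := by
    intro k
    rcases lt_or_ge k a with hka | hak
    · rw [countP_eq_zero.2 fun x hx => by have := hS x hx; omega,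
        countP_eq_zero.2 fun x hx => by have := hT x hx; omega]
    rcases lt_or_ge b k with hbk | hkb
    · rw [countP_eq_card.2 fun x hx => by have := hS x hx; omega,
        countP_eq_card.2 fun x hx => by have := hT x hx; omega,
        ← countP_eq_card.2 fun x hx => (hS x hx).2, ← countP_eq_card.2 fun x hx => (hT x hx).2]
      exact h b hab le_rfl
    · exact h k hak hkb
  refine ext.2 fun x => ?_
  rcases x with _ | x
  · rw [← countP_le_zero_eq_count, ← countP_le_zero_eq_count, hall]
  · have hS := S.countP_le_succ_eq_countP_le_add_count x
    have hT := T.countP_le_succ_eq_countP_le_add_count x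
    rw [hall, hall] at hS
    omega

end Multiset

def Nested (s t : Seg) : Prop := (t.1 ≤ s.1 ∧ s.2 ≤ t.2) ∨ (s.1 ≤ t.1 ∧ t.2 ≤ s.2)

def IsNestedFamily (X : Multiset Seg) : Prop := ∀ s ∈ X, ∀ t ∈ X, Nested s t

instance : Std.Symm Nested := ⟨fun _ _ h => h.symm⟩

lemma nested_refl (s : Seg) : Nested s s := Or.inl ⟨le_rfl, le_rfl⟩

lemma isNestedFamily_coe {l : List Seg} (h : l.Pairwise Nested) : IsNestedFamily l := by
  intro s hs t ht
  rcases eq_or_ne s t with rfl | hne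
  · exact nested_refl s
  · exact h.forall hs ht hne

lemma IsNestedFamily.mono {X Y : Multiset Seg} (hY : IsNestedFamily Y) (h : X ≤ Y) :
    IsNestedFamily X :=
  fun s hs t ht => hY s (Multiset.mem_of_le h hs) t (Multiset.mem_of_le h ht)

lemma IsNestedFamily.add {X Y : Multiset Seg} (hX : IsNestedFamily X) (hY : IsNestedFamily Y)
    (hXY : ∀ s ∈ X, ∀ t ∈ Y, Nested s t) : IsNestedFamily (X + Y) := by
  intro s hs t ht
  rcases Multiset.mem_add.1 hs with hs | hs <;> rcases Multiset.mem_add.1 ht with ht | ht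
  exacts [hX s hs t ht, hXY s hs t ht, (hXY t ht s hs).symm, hY s hs t ht]

lemma IsNestedFamily.mem_of_isGreatest_of_isLeast {X : Multiset Seg} (hX : IsNestedFamily X)
    {a b : ℕ} (ha : IsGreatest {c | c ∈ X.map Prod.fst} a)
    (hb : IsLeast {c | c ∈ X.map Prod.snd} b) : (a, b) ∈ X := by
  obtain ⟨⟨s, hs, rfl⟩, hsmax⟩ := And.imp_left Multiset.mem_map.1 ha
  obtain ⟨⟨t, ht, rfl⟩, htmin⟩ := And.imp_left Multiset.mem_map.1 hb
  rcases hX s hs t ht with ⟨-, h⟩ | ⟨h, -⟩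
  · rwa [show (s.1, t.2) = s from
      Prod.ext rfl (le_antisymm (htmin (Multiset.mem_map_of_mem _ hs)) h)]
  · rwa [show (s.1, t.2) = t from
      Prod.ext (le_antisymm h (hsmax (Multiset.mem_map_of_mem _ ht))) rfl]

theorem IsNestedFamily.ext {X Y : Multiset Seg} (hX : IsNestedFamily X) (hY : IsNestedFamily Y)
    (hfst : X.map Prod.fst = Y.map Prod.fst) (hsnd : X.map Prod.snd = Y.map Prod.snd) :
    X = Y := by
  induction X using Multiset.strongInductionOn generalizing Y with
  | _ X ih =>
    rcases eq_or_ne X 0 with rfl | hX0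
    · simpa [eq_comm] using hfst
    obtain ⟨a, ha, hamax⟩ := (X.map Prod.fst).exists_max_image id (by simpa using hX0)
    obtain ⟨b, hb, hbmin⟩ := (X.map Prod.snd).exists_min_image id (by simpa using hX0)
    have ha : IsGreatest {c | c ∈ X.map Prod.fst} a := ⟨ha, hamax⟩
    have hb : IsLeast {c | c ∈ X.map Prod.snd} b := ⟨hb, hbmin⟩
    obtain ⟨X', rfl⟩ := Multiset.exists_cons_of_mem (hX.mem_of_isGreatest_of_isLeast ha hb)
    obtain ⟨Y', rfl⟩ := Multiset.exists_cons_of_mem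
      (hY.mem_of_isGreatest_of_isLeast (hfst ▸ ha) (hsnd ▸ hb))
    simp only [Multiset.map_cons, Multiset.cons_inj_right] at hfst hsnd
    rw [ih X' (Multiset.lt_cons_self _ _) (hX.mono (Multiset.le_cons_self _ _))
      (hY.mono (Multiset.le_cons_self _ _)) hfst hsnd]

abbrev Crosses (c : ℕ) (s : Seg) : Prop := s.1 ≤ c ∧ c < s.2

@[simps]
def shift (c : ℕ) (s : Seg) : Seg := (s.1 + c, s.2 + c)

lemma IsNestedFamily.map_shift {X : Multiset Seg} (hX : IsNestedFamily X) {c : ℕ} :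
    IsNestedFamily (X.map (shift c)) := by
  intro s hs t ht
  obtain ⟨s, hs', rfl⟩ := Multiset.mem_map.1 hs
  obtain ⟨t, ht', rfl⟩ := Multiset.mem_map.1 ht
  unfold Nested
  have := hX s hs' t ht'
  unfold Nested at this
  simp only [shift_fst, shift_snd]
  omega

def topStarts (p : ℕ) (M : Multiset Seg) : Multiset ℕ := (M.filter (·.2 = p)).map Prod.fst

def bottomEnds (N : Multiset Seg) : Multiset ℕ := (N.filter (·.1 = 1)).map Prod.snd

def glueStarts (p q : ℕ) (M : Multiset Seg) : List ℕ :=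
  ((topStarts p M + Multiset.replicate q 1).sort (· ≤ ·)).reverse

def glueEnds (p q : ℕ) (N : Multiset Seg) : List ℕ :=
  (bottomEnds N + Multiset.replicate p q).sort (· ≤ ·)

def gluePairs (p q : ℕ) (M N : Multiset Seg) : List (ℕ × ℕ) :=
  (glueStarts p q M).zip (glueEnds p q N)

def glued (p q : ℕ) (M N : Multiset Seg) : Multiset Seg :=
  (gluePairs p q M N : Multiset (ℕ × ℕ)).map fun x => (x.1, x.2 + p)

lemma concatMS_eq {p q : ℕ} (M N : Multiset Seg) (hp : p ≠ 0) (hq : q ≠ 0) :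
    concatMS p q M N
      = M.filter (·.2 < p) + (N.filter (1 < ·.1)).map (shift p) + glued p q M N := by
  rw [concatMS, if_neg hp, if_neg hq]
  rfl

lemma concatMS_zero_left (q : ℕ) (M N : Multiset Seg) : concatMS 0 q M N = N := rfl

lemma concatMS_zero_right {p : ℕ} (hp : p ≠ 0) (M N : Multiset Seg) : concatMS p 0 M N = M := by
  rw [concatMS, if_neg hp, if_pos rfl]

lemma InR.eq_zero {M : Multiset Seg} (hM : InR 0 M) : M = 0 :=
  Multiset.eq_zero_of_forall_notMem fun s hs => by have := hM.1 s hs; omega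

lemma concatMS_zero_zero_right {p : ℕ} {M : Multiset Seg} (hM : InR p M) :
    concatMS p 0 M 0 = M := by
  rcases eq_or_ne p 0 with rfl | hp
  · rw [concatMS_zero_left, hM.eq_zero]
  · exact concatMS_zero_right hp M 0

section Concat

variable {p q : ℕ} {M N : Multiset Seg}

lemma card_topStarts (hM : InR p M) (hp : p ≠ 0) : Multiset.card (topStarts p M) = p + 1 := by
  rw [topStarts, Multiset.card_map, ← hM.2 p (by omega) le_rfl, wt]
  congr 1
  exact Multiset.filter_congr fun s hs => by have := hM.1 s hs; omega

lemma card_bottomEnds (hN : InR q N) (hq : q ≠ 0) : Multiset.card (bottomEnds N) = q + 1 := by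
  rw [bottomEnds, Multiset.card_map, ← hN.2 1 le_rfl (by omega), wt]
  congr 1
  exact Multiset.filter_congr fun s hs => by have := hN.1 s hs; omega

lemma mem_topStarts (hM : InR p M) {a : ℕ} (ha : a ∈ topStarts p M) : 1 ≤ a ∧ a ≤ p := by
  obtain ⟨s, hs, rfl⟩ := Multiset.mem_map.1 ha
  have := hM.1 s (Multiset.mem_filter.1 hs).1
  have := (Multiset.mem_filter.1 hs).2
  omega

lemma mem_bottomEnds (hN : InR q N) {b : ℕ} (hb : b ∈ bottomEnds N) : 1 ≤ b ∧ b ≤ q := by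
  obtain ⟨s, hs, rfl⟩ := Multiset.mem_map.1 hb
  have := hN.1 s (Multiset.mem_filter.1 hs).1
  omega

lemma coe_glueStarts :
    (glueStarts p q M : Multiset ℕ) = topStarts p M + Multiset.replicate q 1 := by
  rw [glueStarts, Multiset.coe_reverse, Multiset.sort_eq]

lemma coe_glueEnds : (glueEnds p q N : Multiset ℕ) = bottomEnds N + Multiset.replicate p q := by
  rw [glueEnds, Multiset.sort_eq]

lemma length_glueStarts_eq_length_glueEnds (hM : InR p M) (hN : InR q N) (hp : p ≠ 0)
    (hq : q ≠ 0) : (glueStarts p q M).length = (glueEnds p q N).length := by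
  rw [← Multiset.coe_card, ← Multiset.coe_card, coe_glueStarts, coe_glueEnds, Multiset.card_add,
    Multiset.card_add, card_topStarts hM hp, card_bottomEnds hN hq, Multiset.card_replicate,
    Multiset.card_replicate]
  omega

lemma map_fst_gluePairs (hM : InR p M) (hN : InR q N) (hp : p ≠ 0) (hq : q ≠ 0) :
    (gluePairs p q M N : Multiset (ℕ × ℕ)).map Prod.fst
      = topStarts p M + Multiset.replicate q 1 := by
  rw [Multiset.map_coe, gluePairs,
    List.map_fst_zip (length_glueStarts_eq_length_glueEnds hM hN hp hq).le, coe_glueStarts]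

lemma map_snd_gluePairs (hM : InR p M) (hN : InR q N) (hp : p ≠ 0) (hq : q ≠ 0) :
    (gluePairs p q M N : Multiset (ℕ × ℕ)).map Prod.snd
      = bottomEnds N + Multiset.replicate p q := by
  rw [Multiset.map_coe, gluePairs,
    List.map_snd_zip (length_glueStarts_eq_length_glueEnds hM hN hp hq).ge, coe_glueEnds]

lemma mem_gluePairs (hM : InR p M) (hN : InR q N) (hp : p ≠ 0) (hq : q ≠ 0) {x : ℕ × ℕ}
    (hx : x ∈ gluePairs p q M N) : (1 ≤ x.1 ∧ x.1 ≤ p) ∧ (1 ≤ x.2 ∧ x.2 ≤ q) := by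
  have hx := List.of_mem_zip (a := x.1) (b := x.2) hx
  have h₁ : x.1 ∈ topStarts p M + Multiset.replicate q 1 := coe_glueStarts ▸ hx.1
  have h₂ : x.2 ∈ bottomEnds N + Multiset.replicate p q := coe_glueEnds ▸ hx.2
  rw [Multiset.mem_add, Multiset.mem_replicate] at h₁ h₂
  refine ⟨h₁.elim (mem_topStarts hM) ?_, h₂.elim (mem_bottomEnds hN) ?_⟩ <;> omega

lemma pairwise_glueEnds : (glueEnds p q N).Pairwise (· ≤ ·) := Multiset.pairwise_sort _ _

lemma pairwise_gluePairs :
    (gluePairs p q M N).Pairwise (fun x y => y.1 ≤ x.1 ∧ x.2 ≤ y.2) :=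
  List.pairwise_zip_of_pairwise (r₁ := fun a b => b ≤ a)
    (List.pairwise_reverse.2 (Multiset.pairwise_sort _ _)) pairwise_glueEnds

lemma isNestedFamily_glued : IsNestedFamily (glued p q M N) := by
  rw [glued, Multiset.map_coe]
  refine isNestedFamily_coe (List.pairwise_map.2 (pairwise_gluePairs.imp fun h => Or.inl ?_))
  exact ⟨h.1, Nat.add_le_add_right h.2 p⟩

lemma mem_concatMS (hM : InR p M) (hN : InR q N) (hp : p ≠ 0) (hq : q ≠ 0) {s : Seg}
    (hs : s ∈ concatMS p q M N) : 1 ≤ s.1 ∧ s.1 ≤ s.2 ∧ s.2 ≤ p + q ∧ s.2 ≠ p := by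
  rw [concatMS_eq M N hp hq, Multiset.mem_add, Multiset.mem_add] at hs
  rcases hs with (hs | hs) | hs
  · have := hM.1 s (Multiset.mem_of_mem_filter hs)
    have := (Multiset.mem_filter.1 hs).2
    omega
  · obtain ⟨t, ht, rfl⟩ := Multiset.mem_map.1 hs
    have := hN.1 t (Multiset.mem_of_mem_filter ht)
    simp only [shift_fst, shift_snd]
    omega
  · obtain ⟨x, hx, rfl⟩ := Multiset.mem_map.1 hs
    have := mem_gluePairs hM hN hp hq (Multiset.mem_coe.1 hx)
    omega

lemma filter_crosses_concatMS (hM : InR p M) (hN : InR q N) (hp : p ≠ 0) (hq : q ≠ 0) :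
    (concatMS p q M N).filter (Crosses p) = glued p q M N := by
  have hlow : (M.filter (·.2 < p)).filter (Crosses p) = 0 :=
    Multiset.filter_eq_nil.2 fun s hs => by
      have := (Multiset.mem_filter.1 hs).2
      omega
  have hshift : ((N.filter (1 < ·.1)).map (shift p)).filter (Crosses p) = 0 :=
    Multiset.filter_eq_nil.2 fun s hs => by
      obtain ⟨t, ht, rfl⟩ := Multiset.mem_map.1 hs
      have := (Multiset.mem_filter.1 ht).2
      simp only [Crosses, shift_fst]
      omega
  have hglued : (glued p q M N).filter (Crosses p) = glued p q M N :=
    Multiset.filter_eq_self.2 fun s hs => by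
      obtain ⟨x, hx, rfl⟩ := Multiset.mem_map.1 hs
      have := mem_gluePairs hM hN hp hq (Multiset.mem_coe.1 hx)
      omega
  rw [concatMS_eq M N hp hq, Multiset.filter_add, Multiset.filter_add, hlow, hshift, hglued,
    zero_add, zero_add]

lemma filter_not_crosses_concatMS (hM : InR p M) (hN : InR q N) (hp : p ≠ 0) (hq : q ≠ 0) :
    (concatMS p q M N).filter (¬Crosses p ·)
      = M.filter (·.2 < p) + (N.filter (1 < ·.1)).map (shift p) := by
  have h := Multiset.filter_add_not (Crosses p) (concatMS p q M N)
  rw [filter_crosses_concatMS hM hN hp hq, add_comm] at h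
  conv_rhs at h => rw [concatMS_eq M N hp hq]
  exact add_right_cancel h

end Concat

section Weight

variable {p q k : ℕ} {M N : Multiset Seg}

lemma wt_eq_countP (X : Multiset Seg) :
    wt X k = X.countP (fun s => s.1 ≤ k ∧ k ≤ s.2) :=
  (Multiset.countP_eq_card_filter _ _).symm

lemma wt_add (X Y : Multiset Seg) : wt (X + Y) k = wt X k + wt Y k := by
  simp only [wt_eq_countP, Multiset.countP_add]

lemma wt_eq_zero {X : Multiset Seg} (h : ∀ s ∈ X, k < s.1 ∨ s.2 < k) : wt X k = 0 := by
  rw [wt_eq_countP, Multiset.countP_eq_zero]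
  intro s hs
  have := h s hs
  omega

lemma wt_map_shift (X : Multiset Seg) (c : ℕ) : wt (X.map (shift c)) (k + c) = wt X k := by
  rw [wt_eq_countP, wt_eq_countP, Multiset.countP_map, Multiset.countP_eq_card_filter]
  congr 1
  exact Multiset.filter_congr fun s _ => by simp only [shift_fst, shift_snd]; omega

lemma wt_eq_wt_filter_add_countP_topStarts (hM : InR p M) (hk : k ≤ p) :
    wt M k = wt (M.filter (·.2 < p)) k + (topStarts p M).countP (· ≤ k) := by
  conv_lhs => rw [← Multiset.filter_add_not (·.2 < p) M]
  rw [wt_add, topStarts, Multiset.countP_map]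
  congr 1
  simp only [wt, Multiset.filter_filter]
  congr 1
  exact Multiset.filter_congr fun s hs => by have := hM.1 s hs; omega

lemma wt_eq_wt_filter_add_countP_bottomEnds (hN : InR q N) (hk : 1 ≤ k) :
    wt N k = wt (N.filter (1 < ·.1)) k + (bottomEnds N).countP (k ≤ ·) := by
  conv_lhs => rw [← Multiset.filter_add_not (1 < ·.1) N]
  rw [wt_add, bottomEnds, Multiset.countP_map]
  congr 1
  simp only [wt, Multiset.filter_filter]
  congr 1
  exact Multiset.filter_congr fun s hs => by have := hN.1 s hs; omega

lemma wt_glued_of_le (hM : InR p M) (hN : InR q N) (hp : p ≠ 0) (hq : q ≠ 0) (hk₁ : 1 ≤ k)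
    (hk : k ≤ p) : wt (glued p q M N) k = (topStarts p M).countP (· ≤ k) + q := by
  have hcount : (topStarts p M + Multiset.replicate q 1).countP (· ≤ k)
      = (topStarts p M).countP (· ≤ k) + q := by
    rw [Multiset.countP_add, Multiset.countP_replicate_of_pos (P := (· ≤ k)) q hk₁]
  rw [← hcount, ← map_fst_gluePairs hM hN hp hq, wt_eq_countP, glued, Multiset.countP_map,
    Multiset.countP_map]
  congr 1
  exact Multiset.filter_congr fun x hx => by
    have := mem_gluePairs hM hN hp hq (Multiset.mem_coe.1 hx)
    dsimp only
    omega

lemma wt_glued_add (hM : InR p M) (hN : InR q N) (hp : p ≠ 0) (hq : q ≠ 0) (hk : k ≤ q) :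
    wt (glued p q M N) (k + p) = (bottomEnds N).countP (k ≤ ·) + p := by
  have hcount : (bottomEnds N + Multiset.replicate p q).countP (k ≤ ·)
      = (bottomEnds N).countP (k ≤ ·) + p := by
    rw [Multiset.countP_add, Multiset.countP_replicate_of_pos (P := (k ≤ ·)) p hk]
  rw [← hcount, ← map_snd_gluePairs hM hN hp hq, wt_eq_countP, glued, Multiset.countP_map,
    Multiset.countP_map]
  congr 1
  exact Multiset.filter_congr fun x hx => by
    have := mem_gluePairs hM hN hp hq (Multiset.mem_coe.1 hx)
    dsimp only
    omega

lemma wt_concatMS (hM : InR p M) (hN : InR q N) (hp : p ≠ 0) (hq : q ≠ 0) (hk₁ : 1 ≤ k)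
    (hk : k ≤ p + q) : wt (concatMS p q M N) k = p + q + 1 := by
  rw [concatMS_eq M N hp hq, wt_add, wt_add]
  rcases le_or_gt k p with hkp | hpk
  · have hshift : wt ((N.filter (1 < ·.1)).map (shift p)) k = 0 := wt_eq_zero fun s hs => by
      obtain ⟨t, ht, rfl⟩ := Multiset.mem_map.1 hs
      have := (Multiset.mem_filter.1 ht).2
      simp only [shift_fst]
      omega
    have hMk := wt_eq_wt_filter_add_countP_topStarts hM hkp
    rw [hM.2 k hk₁ hkp] at hMk
    rw [hshift, wt_glued_of_le hM hN hp hq hk₁ hkp]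
    omega
  · obtain ⟨j, rfl⟩ : ∃ j, k = j + p := ⟨k - p, by omega⟩
    have hlow : wt (M.filter (·.2 < p)) (j + p) = 0 := wt_eq_zero fun s hs => by
      have := (Multiset.mem_filter.1 hs).2
      omega
    have hNj := wt_eq_wt_filter_add_countP_bottomEnds hN (k := j) (by omega)
    rw [hN.2 j (by omega) (by omega)] at hNj
    rw [hlow, wt_map_shift, wt_glued_add hM hN hp hq (by omega)]
    omega

theorem InR.concatMS (hM : InR p M) (hN : InR q N) : InR (p + q) (concatMS p q M N) := by
  rcases eq_or_ne p 0 with rfl | hp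
  · simpa [concatMS_zero_left] using hN
  rcases eq_or_ne q 0 with rfl | hq
  · simpa [concatMS_zero_right hp] using hM
  exact ⟨fun s hs => (mem_concatMS hM hN hp hq hs).imp_right fun h => ⟨h.1, h.2.1⟩,
    fun k hk₁ hk => wt_concatMS hM hN hp hq hk₁ hk⟩

lemma wt_eq_countP_map_fst {Z : Multiset Seg} (h : ∀ s ∈ Z, k ≤ s.2) :
    wt Z k = (Z.map Prod.fst).countP (· ≤ k) := by
  rw [wt_eq_countP, Multiset.countP_map, Multiset.countP_eq_card_filter]
  congr 1
  exact Multiset.filter_congr fun s hs => and_iff_left (h s hs)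

lemma wt_eq_countP_map_snd {Z : Multiset Seg} (h : ∀ s ∈ Z, s.1 ≤ k) :
    wt Z k = (Z.map Prod.snd).countP (k ≤ ·) := by
  rw [wt_eq_countP, Multiset.countP_map, Multiset.countP_eq_card_filter]
  congr 1
  exact Multiset.filter_congr fun s hs => and_iff_right (h s hs)

section Cut

variable {n c : ℕ} {X Y : Multiset Seg}

lemma InR.wt_filter_eq_of_filter_not_eq (hX : InR n X) (hY : InR n Y) (P : Seg → Prop)
    [DecidablePred P] (hnot : X.filter (¬P ·) = Y.filter (¬P ·)) (hk : 1 ≤ k) (hkn : k ≤ n) :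
    wt (X.filter P) k = wt (Y.filter P) k := by
  have hXk := hX.2 k hk hkn
  have hYk := hY.2 k hk hkn
  rw [← Multiset.filter_add_not P X, wt_add] at hXk
  rw [← Multiset.filter_add_not P Y, wt_add, ← hnot] at hYk
  omega

lemma InR.bounds_of_mem_filter_crosses (hX : InR n X) {s : Seg} (hs : s ∈ X.filter (Crosses c)) :
    (1 ≤ s.1 ∧ s.1 ≤ c) ∧ (c + 1 ≤ s.2 ∧ s.2 ≤ n) := by
  have := hX.1 s (Multiset.mem_of_mem_filter hs)
  have := (Multiset.mem_filter.1 hs).2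
  omega

lemma InR.map_fst_filter_crosses_eq (hX : InR n X) (hY : InR n Y) (hc : 1 ≤ c) (hcn : c ≤ n)
    (hnot : X.filter (¬Crosses c ·) = Y.filter (¬Crosses c ·)) :
    (X.filter (Crosses c)).map Prod.fst = (Y.filter (Crosses c)).map Prod.fst := by
  refine Multiset.eq_of_countP_le_eq hc
    (Multiset.forall_mem_map_iff.2 fun s hs => (hX.bounds_of_mem_filter_crosses hs).1)
    (Multiset.forall_mem_map_iff.2 fun s hs => (hY.bounds_of_mem_filter_crosses hs).1)
    fun k hk hkc => ?_
  rw [← wt_eq_countP_map_fst fun s hs => by have := hX.bounds_of_mem_filter_crosses hs; omega,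
    ← wt_eq_countP_map_fst fun s hs => by have := hY.bounds_of_mem_filter_crosses hs; omega]
  exact hX.wt_filter_eq_of_filter_not_eq hY _ hnot hk (hkc.trans hcn)

lemma InR.map_snd_filter_crosses_eq (hX : InR n X) (hY : InR n Y) (hcn : c < n)
    (hnot : X.filter (¬Crosses c ·) = Y.filter (¬Crosses c ·)) :
    (X.filter (Crosses c)).map Prod.snd = (Y.filter (Crosses c)).map Prod.snd := by
  refine Multiset.eq_of_countP_ge_eq hcn
    (Multiset.forall_mem_map_iff.2 fun s hs => (hX.bounds_of_mem_filter_crosses hs).2)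
    (Multiset.forall_mem_map_iff.2 fun s hs => (hY.bounds_of_mem_filter_crosses hs).2)
    fun k hk hkn => ?_
  rw [← wt_eq_countP_map_snd fun s hs => by have := hX.bounds_of_mem_filter_crosses hs; omega,
    ← wt_eq_countP_map_snd fun s hs => by have := hY.bounds_of_mem_filter_crosses hs; omega]
  exact hX.wt_filter_eq_of_filter_not_eq hY _ hnot (by omega) hkn

theorem InR.eq_of_filter_not_crosses_eq (hX : InR n X) (hY : InR n Y) (hc : 1 ≤ c) (hcn : c < n)
    (hnot : X.filter (¬Crosses c ·) = Y.filter (¬Crosses c ·))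
    (hXc : IsNestedFamily (X.filter (Crosses c))) (hYc : IsNestedFamily (Y.filter (Crosses c))) :
    X = Y := by
  rw [← Multiset.filter_add_not (Crosses c) X, ← Multiset.filter_add_not (Crosses c) Y, hnot,
    hXc.ext hYc (hX.map_fst_filter_crosses_eq hY hc hcn.le hnot)
      (hX.map_snd_filter_crosses_eq hY hcn hnot)]

end Cut

end Weight

theorem not_exists_suspMS_eq_concatMS {n : ℕ} (M : Multiset Seg) :
    ¬ ∃ (p q : ℕ) (A B : Multiset Seg), 1 ≤ p ∧ 1 ≤ q ∧ p + q = n + 2 ∧ InR p A ∧ InR q B ∧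
      suspMS n M = concatMS p q A B := by
  rintro ⟨p, q, A, B, hp, hq, hpq, hA, hB, heq⟩
  have hmem : ∀ s ∈ suspMS n M, s.2 ≠ p ∧ (s.1 ≤ p → p < s.2 → s ∈ glued p q A B) := by
    intro s hs
    rw [heq] at hs
    refine ⟨(mem_concatMS hA hB (by omega) (by omega) hs).2.2.2, fun h₁ h₂ => ?_⟩
    rw [← filter_crosses_concatMS hA hB (by omega) (by omega)]
    exact Multiset.mem_filter.2 ⟨hs, h₁, h₂⟩
  rcases eq_or_ne n 0 with rfl | hn
  · have := hmem (1, 1) (by simp [suspMS])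
    omega
  have h₁ := hmem (1, 1) (by simp [suspMS, hn])
  have h₂ := hmem (1, n + 1) (by simp [suspMS, hn])
  have h₃ := hmem (2, n + 2) (by simp [suspMS, hn])
  dsimp only at h₁ h₂ h₃
  have := isNestedFamily_glued _ (h₂.2 (by omega) (by omega)) _ (h₃.2 (by omega) (by omega))
  unfold Nested at this
  omega

theorem suspMS_inj {n : ℕ} {M M' : Multiset Seg} (hM : InR n M) (hM' : InR n M')
    (h : suspMS n M = suspMS n M') : M = M' := by
  rcases eq_or_ne n 0 with rfl | hn
  · rw [hM.eq_zero, hM'.eq_zero]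
  rw [suspMS, if_neg hn, suspMS, if_neg hn, add_left_inj] at h
  let desusp : Seg → Seg := fun s =>
    (if s.1 = 1 then 1 else s.1 - 1, if s.2 = n + 2 then n else s.2 - 1)
  have hdesusp : ∀ {X : Multiset Seg}, InR n X →
      ((X.map fun s => (if s.1 = 1 then 1 else s.1 + 1,
        if s.2 = n then n + 2 else s.2 + 1)).map desusp) = X := by
    intro X hX
    rw [Multiset.map_map]
    refine (Multiset.map_congr rfl fun s hs => ?_).trans (Multiset.map_id X)
    have := hX.1 s hs
    simp only [desusp, Function.comp_apply, id, Prod.ext_iff]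
    constructor <;> split_ifs <;> omega
  rw [← hdesusp hM, h, hdesusp hM']

section Assoc

variable {p q r : ℕ} {M N P : Multiset Seg}

lemma glueStarts_eq_append (hM : InR p M) (c : ℕ) :
    glueStarts p c M = ((topStarts p M).sort (· ≤ ·)).reverse ++ List.replicate c 1 := by
  rw [glueStarts, add_comm, Multiset.sort_add_of_forall_le, Multiset.sort_replicate,
    List.reverse_append, List.reverse_replicate]
  intro a ha b hb
  rw [Multiset.eq_of_mem_replicate ha]
  exact (mem_topStarts hM hb).1

lemma bottomEnds_concatMS (N P : Multiset Seg) (hq : q ≠ 0) (hr : r ≠ 0) :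
    bottomEnds (concatMS q r N P) = (bottomEnds N).filter (· < q)
      + ((gluePairs q r N P : Multiset (ℕ × ℕ)).filter (·.1 = 1)).map (·.2 + q) := by
  have hshift : ((P.filter (1 < ·.1)).map (shift q)).filter (·.1 = 1) = 0 :=
    Multiset.filter_eq_nil.2 fun s hs => by
      obtain ⟨t, ht, rfl⟩ := Multiset.mem_map.1 hs
      have := (Multiset.mem_filter.1 ht).2
      simp only [shift_fst]
      omega
  rw [bottomEnds, concatMS_eq N P hq hr, Multiset.filter_add, Multiset.filter_add, hshift,
    add_zero, Multiset.map_add, bottomEnds, Multiset.filter_map, Multiset.filter_comm, glued,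
    Multiset.filter_map, Multiset.map_map]
  rfl

lemma filter_gluePairs_concatMS (hM : InR p M) (hN : InR q N) (hp : p ≠ 0) (hq : q ≠ 0)
    (hr : r ≠ 0) :
    (gluePairs p q M N).filter (·.2 < q)
      = (gluePairs p (q + r) M (concatMS q r N P)).filter (·.2 < q) := by
  have hends : (glueEnds p q N).filter (· < q)
      = (glueEnds p (q + r) (concatMS q r N P)).filter (· < q) := by
    have hrep : ∀ c, q ≤ c → (Multiset.replicate p c).filter (· < q) = 0 := fun c hc =>
      Multiset.filter_eq_nil.2 fun a ha => by rw [Multiset.eq_of_mem_replicate ha]; omega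
    have hglued : (((gluePairs q r N P : Multiset (ℕ × ℕ)).filter (·.1 = 1)).map
        (·.2 + q)).filter (· < q) = 0 :=
      Multiset.filter_eq_nil.2 fun a ha => by
        obtain ⟨x, -, rfl⟩ := Multiset.mem_map.1 ha
        omega
    rw [glueEnds, glueEnds, Multiset.filter_sort, Multiset.filter_sort, Multiset.filter_add,
      Multiset.filter_add, hrep q le_rfl, hrep (q + r) (by omega), bottomEnds_concatMS N P hq hr,
      Multiset.filter_add, hglued]
    simp only [Multiset.filter_filter, and_self, add_zero]
  rw [gluePairs, gluePairs, List.filter_zip_snd_lt q _ pairwise_glueEnds,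
    List.filter_zip_snd_lt q _ pairwise_glueEnds, ← hends, glueStarts_eq_append hM,
    glueStarts_eq_append hM, List.take_append_replicate_add _ _ r]
  refine (List.length_filter_le _ _).trans ?_
  rw [← Multiset.coe_card, coe_glueEnds, List.length_reverse, Multiset.length_sort,
    Multiset.card_add, Multiset.card_replicate, card_topStarts hM hp,
    card_bottomEnds hN hq]
  omega

lemma map_shift_map_shift (X : Multiset Seg) (a b : ℕ) :
    (X.map (shift a)).map (shift b) = X.map (shift (a + b)) := by
  rw [Multiset.map_map]
  exact Multiset.map_congr rfl fun s _ => by simp only [Function.comp_apply, shift, add_assoc]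

lemma filter_glued_concatMS (hM : InR p M) (hN : InR q N) (hp : p ≠ 0) (hq : q ≠ 0)
    (hr : r ≠ 0) :
    (glued p q M N).filter (·.2 < p + q)
      = (glued p (q + r) M (concatMS q r N P)).filter (·.2 < p + q) := by
  have h : ∀ G : List (ℕ × ℕ), (G : Multiset (ℕ × ℕ)).filter
      ((·.2 < p + q) ∘ fun x => (x.1, x.2 + p)) = ↑(G.filter (·.2 < q)) := fun G => by
    rw [← Multiset.filter_coe]
    exact Multiset.filter_congr fun x _ => by simp only [Function.comp_apply]; omega
  rw [glued, glued, Multiset.filter_map, Multiset.filter_map, h, h,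
    filter_gluePairs_concatMS hM hN hp hq hr]

lemma filter_snd_lt_concatMS (M N : Multiset Seg) (hp : p ≠ 0) (hq : q ≠ 0) :
    (concatMS p q M N).filter (·.2 < p + q) = M.filter (·.2 < p)
      + ((N.filter (1 < ·.1)).filter (·.2 < q)).map (shift p)
      + (glued p q M N).filter (·.2 < p + q) := by
  have hlow : (M.filter (·.2 < p)).filter (·.2 < p + q) = M.filter (·.2 < p) :=
    Multiset.filter_eq_self.2 fun s hs => by
      have := (Multiset.mem_filter.1 hs).2
      omega
  rw [concatMS_eq M N hp hq, Multiset.filter_add, Multiset.filter_add, hlow, Multiset.filter_map]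
  congr 3
  exact Multiset.filter_congr fun s _ => by simp only [Function.comp_apply, shift_snd]; omega

lemma snd_ne_of_mem_gluePairs_concatMS (hN : InR q N) (hP : InR r P) (hq : q ≠ 0) (hr : r ≠ 0)
    {x : ℕ × ℕ} (hx : x ∈ gluePairs p (q + r) M (concatMS q r N P)) : x.2 ≠ q := by
  have h : x.2 ∈ bottomEnds (concatMS q r N P) + Multiset.replicate p (q + r) :=
    coe_glueEnds ▸ (List.of_mem_zip (a := x.1) (b := x.2) hx).2
  rcases Multiset.mem_add.1 h with h | h
  · obtain ⟨s, hs, hsx⟩ := Multiset.mem_map.1 h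
    exact hsx ▸ (mem_concatMS hN hP hq hr (Multiset.mem_of_mem_filter hs)).2.2.2
  · rw [Multiset.eq_of_mem_replicate h]
    omega

lemma filter_not_crosses_concatMS_concatMS (hM : InR p M) (hN : InR q N) (hP : InR r P)
    (hp : p ≠ 0) (hq : q ≠ 0) (hr : r ≠ 0) :
    (concatMS p (q + r) M (concatMS q r N P)).filter (¬Crosses (p + q) ·)
      = M.filter (·.2 < p) + ((N.filter (·.2 < q)).filter (1 < ·.1)).map (shift p)
        + (P.filter (1 < ·.1)).map (shift (p + q))
        + (glued p (q + r) M (concatMS q r N P)).filter (·.2 < p + q) := by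
  have hNP := hN.concatMS hP
  have hlow : (M.filter (·.2 < p)).filter (¬Crosses (p + q) ·) = M.filter (·.2 < p) :=
    Multiset.filter_eq_self.2 fun s hs => by
      have := (Multiset.mem_filter.1 hs).2
      omega
  have hmid : ((concatMS q r N P).filter (1 < ·.1)).filter ((¬Crosses (p + q) ·) ∘ shift p)
      = (N.filter (·.2 < q)).filter (1 < ·.1) + (P.filter (1 < ·.1)).map (shift q) := by
    have hP' : ((P.filter (1 < ·.1)).map (shift q)).filter (1 < ·.1)
        = (P.filter (1 < ·.1)).map (shift q) :=
      Multiset.filter_eq_self.2 fun s hs => by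
        obtain ⟨t, ht, rfl⟩ := Multiset.mem_map.1 hs
        have := (Multiset.mem_filter.1 ht).2
        simp only [shift_fst]
        omega
    rw [← hP', ← Multiset.filter_add, ← filter_not_crosses_concatMS hN hP hq hr,
      Multiset.filter_comm]
    congr 1
    exact Multiset.filter_congr fun s _ => by simp only [Function.comp_apply, shift]; omega
  have hglued : (glued p (q + r) M (concatMS q r N P)).filter (¬Crosses (p + q) ·)
      = (glued p (q + r) M (concatMS q r N P)).filter (·.2 < p + q) :=
    Multiset.filter_congr fun s hs => by
      obtain ⟨x, hx, rfl⟩ := Multiset.mem_map.1 hs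
      have := mem_gluePairs hM hNP hp (by omega) (Multiset.mem_coe.1 hx)
      have := snd_ne_of_mem_gluePairs_concatMS hN hP hq hr (Multiset.mem_coe.1 hx)
      dsimp only
      omega
  rw [concatMS_eq M _ hp (by omega), Multiset.filter_add, Multiset.filter_add, hlow,
    Multiset.filter_map, hmid, hglued, Multiset.map_add, map_shift_map_shift, Nat.add_comm q p]
  abel

lemma filter_crosses_concatMS_concatMS (hM : InR p M) (hN : InR q N) (hP : InR r P)
    (hp : p ≠ 0) (hq : q ≠ 0) (hr : r ≠ 0) :
    (concatMS p (q + r) M (concatMS q r N P)).filter (Crosses (p + q))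
      = ((glued q r N P).filter (1 < ·.1)).map (shift p)
        + (glued p (q + r) M (concatMS q r N P)).filter (p + q < ·.2) := by
  have hNP := hN.concatMS hP
  have hlow : (M.filter (·.2 < p)).filter (Crosses (p + q)) = 0 :=
    Multiset.filter_eq_nil.2 fun s hs => by
      have := (Multiset.mem_filter.1 hs).2
      omega
  have hmid : ((concatMS q r N P).filter (1 < ·.1)).filter (Crosses (p + q) ∘ shift p)
      = (glued q r N P).filter (1 < ·.1) := by
    rw [← filter_crosses_concatMS hN hP hq hr, Multiset.filter_comm]
    congr 1
    exact Multiset.filter_congr fun s _ => by simp only [Function.comp_apply, shift]; omega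
  have hglued : (glued p (q + r) M (concatMS q r N P)).filter (Crosses (p + q))
      = (glued p (q + r) M (concatMS q r N P)).filter (p + q < ·.2) :=
    Multiset.filter_congr fun s hs => by
      obtain ⟨x, hx, rfl⟩ := Multiset.mem_map.1 hs
      have := mem_gluePairs hM hNP hp (by omega) (Multiset.mem_coe.1 hx)
      dsimp only
      omega
  rw [concatMS_eq M _ hp (by omega), Multiset.filter_add, Multiset.filter_add, hlow, zero_add,
    Multiset.filter_map, hmid, hglued]

/-- The end `y.2` is either the padding `q + r` or the end of a glued segment of `N * P`
starting at `1`, which contains `x` by nestedness. -/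
lemma snd_le_of_mem_glued_of_mem_gluePairs_concatMS (hN : InR q N) (hP : InR r P) (hq : q ≠ 0)
    (hr : r ≠ 0) {x : Seg} (hx : x ∈ glued q r N P) (hx₁ : 1 < x.1) {y : ℕ × ℕ}
    (hy : y ∈ gluePairs p (q + r) M (concatMS q r N P)) (hy₂ : q < y.2) : x.2 ≤ y.2 := by
  have hxNP : x ∈ concatMS q r N P := by
    rw [← filter_crosses_concatMS hN hP hq hr] at hx
    exact Multiset.mem_of_mem_filter hx
  have h : y.2 ∈ bottomEnds (concatMS q r N P) + Multiset.replicate p (q + r) :=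
    coe_glueEnds ▸ (List.of_mem_zip (a := y.1) (b := y.2) hy).2
  rcases Multiset.mem_add.1 h with h | h
  · obtain ⟨z, hz, hzy⟩ := Multiset.mem_map.1 h
    obtain ⟨hzNP, hz₁⟩ := Multiset.mem_filter.1 hz
    have hzglued : z ∈ glued q r N P := by
      rw [← filter_crosses_concatMS hN hP hq hr]
      exact Multiset.mem_filter.2 ⟨hzNP, by omega, by omega⟩
    rcases isNestedFamily_glued x hx z hzglued with h | h <;> omega
  · rw [Multiset.eq_of_mem_replicate h]
    exact (mem_concatMS hN hP hq hr hxNP).2.2.1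

lemma isNestedFamily_filter_crosses_concatMS_concatMS (hM : InR p M) (hN : InR q N)
    (hP : InR r P) (hp : p ≠ 0) (hq : q ≠ 0) (hr : r ≠ 0) :
    IsNestedFamily ((concatMS p (q + r) M (concatMS q r N P)).filter (Crosses (p + q))) := by
  have hNP := hN.concatMS hP
  rw [filter_crosses_concatMS_concatMS hM hN hP hp hq hr]
  refine (isNestedFamily_glued.mono (Multiset.filter_le _ _)).map_shift.add
    (isNestedFamily_glued.mono (Multiset.filter_le _ _)) fun a ha b hb => Or.inl ?_
  obtain ⟨x, hx, rfl⟩ := Multiset.mem_map.1 ha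
  obtain ⟨hx, hx₁⟩ := Multiset.mem_filter.1 hx
  obtain ⟨hb, hb₂⟩ := Multiset.mem_filter.1 hb
  obtain ⟨y, hy, rfl⟩ := Multiset.mem_map.1 hb
  have := mem_gluePairs hM hNP hp (by omega) (Multiset.mem_coe.1 hy)
  have := snd_le_of_mem_glued_of_mem_gluePairs_concatMS hN hP hq hr hx hx₁
    (Multiset.mem_coe.1 hy) (by dsimp only at hb₂; omega)
  simp only [shift_fst, shift_snd]
  omega

theorem concatMS_assoc (hM : InR p M) (hN : InR q N) (hP : InR r P) :
    concatMS (p + q) r (concatMS p q M N) P = concatMS p (q + r) M (concatMS q r N P) := by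
  rcases eq_or_ne p 0 with rfl | hp
  · simp only [zero_add, concatMS_zero_left]
  rcases eq_or_ne q 0 with rfl | hq
  · rw [concatMS_zero_right hp, concatMS_zero_left, add_zero, zero_add]
  rcases eq_or_ne r 0 with rfl | hr
  · rw [concatMS_zero_right (by omega), concatMS_zero_right hq, add_zero]
  have hMN := hM.concatMS hN
  have hR : InR (p + q + r) (concatMS p (q + r) M (concatMS q r N P)) := by
    rw [add_assoc]
    exact hM.concatMS (hN.concatMS hP)
  refine (hMN.concatMS hP).eq_of_filter_not_crosses_eq hR (c := p + q) (by omega) (by omega) ?_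
    ?_ (isNestedFamily_filter_crosses_concatMS_concatMS hM hN hP hp hq hr)
  · rw [filter_not_crosses_concatMS hMN hP (by omega) hr, filter_snd_lt_concatMS M N hp hq,
      filter_not_crosses_concatMS_concatMS hM hN hP hp hq hr,
      filter_glued_concatMS hM hN hp hq hr, Multiset.filter_comm]
    abel
  · rw [filter_crosses_concatMS hMN hP (by omega) hr]
    exact isNestedFamily_glued

end Assoc

/-- the set `R` of all multisegments of weight `(n+1,…,n+1)`,
with concatenation, is a graded monoid with the empty multisegment as
identity; the suspension map is injective and its image consists of primitive
elements (elements which are not concatenations of two multisegments of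
positive length). -/
theorem R_graded_monoid_and_suspension :
    -- concatenation is graded
    (∀ p q M N, InR p M → InR q N → InR (p + q) (concatMS p q M N)) ∧
    -- concatenation is associative
    (∀ p q r M N P, InR p M → InR q N → InR r P →
      concatMS (p + q) r (concatMS p q M N) P
        = concatMS p (q + r) M (concatMS q r N P)) ∧
    -- the empty multisegment is a two-sided identity
    (∀ p M, InR p M → concatMS p 0 M 0 = M ∧ concatMS 0 p 0 M = M) ∧
    -- the suspension map is injective
    (∀ n M M', InR n M → InR n M' → suspMS n M = suspMS n M' → M = M') ∧
    -- the image of the suspension map consists of primitive elements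
    (∀ n M, InR n M → ¬ ∃ (p q : ℕ) (A B : Multiset Seg),
      1 ≤ p ∧ 1 ≤ q ∧ p + q = n + 2 ∧ InR p A ∧ InR q B ∧
      suspMS n M = concatMS p q A B) := by
  exact ⟨fun _ _ _ _ hM hN => hM.concatMS hN, fun _ _ _ _ _ _ => concatMS_assoc,
    fun p M hM => ⟨concatMS_zero_zero_right hM, concatMS_zero_left p 0 M⟩,
    fun _ _ _ => suspMS_inj, fun _ M _ => not_exists_suspMS_eq_concatMS M⟩
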